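/- Let q be a prime power, σ a non-square in F_q^*, and embed F_{q²}^* in GL_2(F_q) via a+b√σ ↦ [[a, bσ],[b, a]]. Let H be the subgroup of matrices [[a,b],[0,1]], Θ a character of F_{q²}^* with F(Θ) ≠ Θ (F the nontrivial Galois automorphism), and r(Θ) the Weil representation of dimension q−1. Given the exact sequence 0 → Ind_{F_{q²}^*}^{GL_2 F_q}(Θ) → Ind_H^{GL_2 F_q}(Θ⊗Ψ) → r(Θ) → 0, one has W_{GL_2 F_q}(r(Θ)) = −q · W_{F_{q²}^*}(Θ). -/
import Mathlib


/- STATEMENT 3: W_{GL₂F_q}(r(Θ)) = −q·W_{F_{q²}^*}(Θ) for the Weil representation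
   r(Θ), given the exact sequence
   0 → Ind_{F_{q²}^*}(Θ) → Ind_H(Θ⊗Ψ) → r(Θ) → 0,
   expressed at the level of characters via the standard induced character formulas. -/

open Matrix
set_option maxHeartbeats 1000000

attribute [local instance] Classical.propDecidable

/-- `ψ(z) = exp(2πi·Tr_{F_q/F_p}(z)/p)`, the additive character of `F_q`. -/
noncomputable def psiF (p : ℕ) (F : Type) [Field F] [Fintype F] [Algebra (ZMod p) F]
    (z : F) : ℂ :=
  Complex.exp (2 * Real.pi * Complex.I * ((Algebra.trace (ZMod p) F z).val : ℂ) / p)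

/-- The additive measure `Ψ(X) = ψ(Trace X)` on `GL_n(F_q)`. -/
noncomputable def Psi (p : ℕ) (F : Type) [Field F] [Fintype F] [Algebra (ZMod p) F]
    (n : ℕ) (X : GL (Fin n) F) : ℂ :=
  psiF p F (Matrix.trace (X : Matrix (Fin n) (Fin n) F))

/-- The sum of `ψ` over `F_q` vanishes. -/
lemma psi_sum_zero (p : ℕ) [hp : Fact p.Prime] (F : Type) [Field F] [Fintype F]
    [Algebra (ZMod p) F] : ∑ z : F, psiF p F z = 0 := by
  haveI : NeZero p := ⟨hp.out.ne_zero⟩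
  haveI : Fact (1 < p) := ⟨hp.out.one_lt⟩
  set ζ : ℂ := Complex.exp (2 * Real.pi * Complex.I / p) with hζdef
  have hp0 : (p : ℂ) ≠ 0 := Nat.cast_ne_zero.2 hp.out.ne_zero
  have hζp : ζ ^ p = 1 := by
    rw [hζdef, ← Complex.exp_nat_mul, mul_div_cancel₀ _ hp0]
    exact Complex.exp_two_pi_mul_I
  have hψ : ∀ z : F, psiF p F z =
      ((AddChar.zmodChar p hζp).compAddMonoidHom
        (Algebra.trace (ZMod p) F).toAddMonoidHom) z := by
    intro z
    rw [AddChar.compAddMonoidHom_apply, AddChar.zmodChar_apply]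
    show psiF p F z = ζ ^ (Algebra.trace (ZMod p) F z).val
    rw [psiF, hζdef, ← Complex.exp_nat_mul]
    ring_nf
  rw [Finset.sum_congr rfl (fun z _ => hψ z)]
  rw [AddChar.sum_eq_zero_iff_ne_zero, AddChar.ne_zero_iff]
  obtain ⟨z, hz⟩ := Algebra.trace_surjective (ZMod p) F 1
  refine ⟨z, ?_⟩
  rw [AddChar.compAddMonoidHom_apply, AddChar.zmodChar_apply]
  have h1 : (Algebra.trace (ZMod p) F).toAddMonoidHom z = (1 : ZMod p) := hz
  rw [h1, ZMod.val_one, pow_one, hζdef]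
  intro h
  rw [Complex.exp_eq_one_iff] at h
  obtain ⟨n, hn⟩ := h
  have h2 : (2 * Real.pi * Complex.I) ≠ 0 := by
    simp [Real.pi_ne_zero, Complex.I_ne_zero]
  rw [div_eq_iff hp0] at hn
  have key : (2 * Real.pi * Complex.I) * (1 - n * p) = 0 := by linear_combination hn
  have h1np : (1 : ℂ) = n * p := by
    rcases mul_eq_zero.mp key with h | h
    · exact absurd h h2
    · exact sub_eq_zero.mp h
  have hint : (1 : ℤ) = n * p := by exact_mod_cast h1np
  have hdvd : (p : ℤ) ∣ 1 := Dvd.intro_left n hint.symm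
  have := Int.le_of_dvd one_pos hdvd
  have := hp.out.two_le
  omega

/-- `Ψ` is a class function. -/
lemma Psi_conj (p : ℕ) (F : Type) [Field F] [Fintype F] [Algebra (ZMod p) F]
    (Y g : GL (Fin 2) F) : Psi p F 2 (Y⁻¹ * g * Y) = Psi p F 2 g := by
  unfold Psi
  congr 1
  exact Matrix.trace_units_conj' Y (g : Matrix (Fin 2) (Fin 2) F)

theorem stmt3 (p : ℕ) [Fact p.Prime] (F : Type) [Field F] [Fintype F] [Algebra (ZMod p) F]
    -- `K = F_{q²}`, the quadratic extension of `F = F_q`: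
    (K : Type) [Field K] [Fintype K] [Algebra F K]
    (hK : Fintype.card K = Fintype.card F ^ 2)
    -- the embedding `F_{q²}^* ↪ GL₂(F_q)`, `a + b√σ ↦ [[a,bσ],[b,a]]`; its matrix
    -- trace realizes the field trace `Tr_{K/F}`:
    (e : Kˣ →* GL (Fin 2) F) (he_inj : Function.Injective e)
    (he_tr : ∀ u : Kˣ, Matrix.trace ((e u : GL (Fin 2) F) : Matrix (Fin 2) (Fin 2) F)
      = Algebra.trace F K (u : K))
    -- a character `Θ` of `F_{q²}^*` with `F(Θ) ≠ Θ`: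
    (Θ : Kˣ →* ℂˣ) (hΘ : Θ.comp (powMonoidHom (Fintype.card F)) ≠ Θ)
    -- the Weil representation `r(Θ)`, of dimension `q − 1`:
    {V : Type} [AddCommGroup V] [Module ℂ V] [FiniteDimensional ℂ V]
    (r : Representation ℂ (GL (Fin 2) F) V)
    (hdim : Module.finrank ℂ V = Fintype.card F - 1)
    -- the exact sequence `0 → Ind_{F_{q²}^*}(Θ) → Ind_H(Θ⊗Ψ) → r(Θ) → 0`, at the
    -- level of characters (with induced characters written by the standard formula;
    -- `H = {[[a,b],[0,1]]}` with character `Θ⊗Ψ : [[a,b],[0,1]] ↦ Θ(a)ψ(b/a)`):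
    (hexact : ∀ X : GL (Fin 2) F,
      ((1 / ((Fintype.card K - 1 : ℕ) : ℂ)) *
          ∑ Y : GL (Fin 2) F, ∑ u : Kˣ,
            if Y * X * Y⁻¹ = e u then (Θ u : ℂ) else 0)
        + LinearMap.trace ℂ V (r X)
      = (1 / (((Fintype.card F - 1) * Fintype.card F : ℕ) : ℂ)) *
          ∑ Y : GL (Fin 2) F, ∑ a : Fˣ, ∑ b : F,
            if ((Y * X * Y⁻¹ : GL (Fin 2) F) : Matrix (Fin 2) (Fin 2) F)
                = !![(a : F), b; 0, 1]
              then (Θ (Units.map ((algebraMap F K) : F →* K) a) : ℂ) * psiF p F (b / (a : F))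
              else 0) :
    -- conclusion: `W_{GL₂F_q}(r(Θ)) = −q·W_{F_{q²}^*}(Θ)`:
    (1 / ((Fintype.card F - 1 : ℕ) : ℂ)) *
        ∑ X : GL (Fin 2) F, LinearMap.trace ℂ V (r X) * Psi p F 2 X
      = -(Fintype.card F : ℂ) * ∑ u : Kˣ, (Θ u : ℂ) * Psi p F 2 (e u) := by
  classical
  set q := Fintype.card F with hq
  set S : ℂ := ∑ u : Kˣ, (Θ u : ℂ) * Psi p F 2 (e u) with hS
  have hq2 : 2 ≤ q := Fintype.one_lt_card
  -- cardinality of GL₂(F_q)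
  have hcardG : (Fintype.card (GL (Fin 2) F) : ℕ) = (q ^ 2 - 1) * (q ^ 2 - q) := by
    rw [← Nat.card_eq_fintype_card, Matrix.card_GL_field]
    simp [Finset.prod_range_succ, hq]
  -- Sum of the induced-from-K^* character against Ψ
  have keyK : ∀ (Y : GL (Fin 2) F) (u : Kˣ),
      (∑ X : GL (Fin 2) F, (if Y * X * Y⁻¹ = e u then (Θ u : ℂ) else 0) * Psi p F 2 X)
        = (Θ u : ℂ) * Psi p F 2 (e u) := by
    intro Y u
    have hcond : ∀ X : GL (Fin 2) F, (Y * X * Y⁻¹ = e u) ↔ (X = Y⁻¹ * e u * Y) := by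
      intro X
      constructor
      · intro h; rw [← h]; group
      · intro h; rw [h]; group
    have : ∀ X : GL (Fin 2) F,
        (if Y * X * Y⁻¹ = e u then (Θ u : ℂ) else 0) * Psi p F 2 X
          = if X = Y⁻¹ * e u * Y then (Θ u : ℂ) * Psi p F 2 X else 0 := by
      intro X
      by_cases h : Y * X * Y⁻¹ = e u
      · rw [if_pos h, if_pos ((hcond X).mp h)]
      · rw [if_neg h, if_neg (fun hh => h ((hcond X).mpr hh)), zero_mul]
    rw [Finset.sum_congr rfl (fun X _ => this X), Finset.sum_ite_eq' Finset.univ,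
      if_pos (Finset.mem_univ _), Psi_conj]
  -- Sum of the induced-from-H character against Ψ
  have keyH : ∀ (Y : GL (Fin 2) F) (a : Fˣ),
      (∑ b : F, ∑ X : GL (Fin 2) F,
        (if ((Y * X * Y⁻¹ : GL (Fin 2) F) : Matrix (Fin 2) (Fin 2) F) = !![(a : F), b; 0, 1]
          then (Θ (Units.map ((algebraMap F K) : F →* K) a) : ℂ) * psiF p F (b / (a : F))
          else 0) * Psi p F 2 X) = 0 := by
    intro Y a
    have key1 : ∀ b : F,
        (∑ X : GL (Fin 2) F,
          (if ((Y * X * Y⁻¹ : GL (Fin 2) F) : Matrix (Fin 2) (Fin 2) F) = !![(a : F), b; 0, 1]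
            then (Θ (Units.map ((algebraMap F K) : F →* K) a) : ℂ) * psiF p F (b / (a : F))
            else 0) * Psi p F 2 X)
          = (Θ (Units.map ((algebraMap F K) : F →* K) a) : ℂ) * psiF p F (b / (a : F)) *
              psiF p F ((a : F) + 1) := by
      intro b
      have hdet : Matrix.det !![(a : F), b; 0, 1] ≠ 0 := by
        rw [Matrix.det_fin_two_of]
        simpa using a.ne_zero
      set U : GL (Fin 2) F := Matrix.GeneralLinearGroup.mkOfDetNeZero _ hdet with hU
      have hUcoe : (U : Matrix (Fin 2) (Fin 2) F) = !![(a : F), b; 0, 1] := rfl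
      have hcond : ∀ X : GL (Fin 2) F,
          (((Y * X * Y⁻¹ : GL (Fin 2) F) : Matrix (Fin 2) (Fin 2) F) = !![(a : F), b; 0, 1])
            ↔ (X = Y⁻¹ * U * Y) := by
        intro X
        rw [← hUcoe]
        constructor
        · intro h
          have h2 : Y * X * Y⁻¹ = U := Units.ext h
          rw [← h2]; group
        · intro h
          have : Y * X * Y⁻¹ = U := by rw [h]; group
          rw [this]
      have hstep : ∀ X : GL (Fin 2) F,
          (if ((Y * X * Y⁻¹ : GL (Fin 2) F) : Matrix (Fin 2) (Fin 2) F) = !![(a : F), b; 0, 1]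
            then (Θ (Units.map ((algebraMap F K) : F →* K) a) : ℂ) * psiF p F (b / (a : F))
            else 0) * Psi p F 2 X
          = if X = Y⁻¹ * U * Y
            then ((Θ (Units.map ((algebraMap F K) : F →* K) a) : ℂ) * psiF p F (b / (a : F)))
              * Psi p F 2 X
            else 0 := by
        intro X
        by_cases h : ((Y * X * Y⁻¹ : GL (Fin 2) F) : Matrix (Fin 2) (Fin 2) F)
            = !![(a : F), b; 0, 1]
        · rw [if_pos h, if_pos ((hcond X).mp h)]
        · rw [if_neg h, if_neg (fun hh => h ((hcond X).mpr hh)), zero_mul]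
      rw [Finset.sum_congr rfl (fun X _ => hstep X), Finset.sum_ite_eq' Finset.univ,
        if_pos (Finset.mem_univ _), Psi_conj]
      congr 1
      unfold Psi
      rw [hUcoe, Matrix.trace_fin_two_of]
    rw [Finset.sum_congr rfl (fun b _ => key1 b)]
    have : ∑ b : F,
        (Θ (Units.map ((algebraMap F K) : F →* K) a) : ℂ) * psiF p F (b / (a : F)) *
          psiF p F ((a : F) + 1)
        = (Θ (Units.map ((algebraMap F K) : F →* K) a) : ℂ) * psiF p F ((a : F) + 1) *
            ∑ b : F, psiF p F (b / (a : F)) := by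
      rw [Finset.mul_sum]
      exact Finset.sum_congr rfl (fun b _ => by ring)
    rw [this]
    have hre : ∑ b : F, psiF p F (b / (a : F)) = ∑ z : F, psiF p F z := by
      have hbij : Function.Bijective (fun b : F => b * (a : F)⁻¹) :=
        (Equiv.mulRight₀ ((a : F)⁻¹) (inv_ne_zero a.ne_zero)).bijective
      refine Fintype.sum_bijective _ hbij _ _ (fun b => ?_)
      rw [div_eq_mul_inv]
    rw [hre, psi_sum_zero, mul_zero]
  -- sum the exact sequence against Ψ
  have hmain := Finset.sum_congr rfl
    (fun X (_ : X ∈ (Finset.univ : Finset (GL (Fin 2) F))) =>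
      congrArg (· * Psi p F 2 X) (hexact X))
  simp only [add_mul] at hmain
  rw [Finset.sum_add_distrib] at hmain
  -- left summand: the Ind_K part
  have hleft : ∑ X : GL (Fin 2) F,
      ((1 / ((Fintype.card K - 1 : ℕ) : ℂ)) *
          ∑ Y : GL (Fin 2) F, ∑ u : Kˣ,
            if Y * X * Y⁻¹ = e u then (Θ u : ℂ) else 0) * Psi p F 2 X
      = (1 / ((Fintype.card K - 1 : ℕ) : ℂ)) *
          ((Fintype.card (GL (Fin 2) F) : ℂ) * S) := by
    have : ∀ X : GL (Fin 2) F,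
        ((1 / ((Fintype.card K - 1 : ℕ) : ℂ)) *
            ∑ Y : GL (Fin 2) F, ∑ u : Kˣ,
              if Y * X * Y⁻¹ = e u then (Θ u : ℂ) else 0) * Psi p F 2 X
        = (1 / ((Fintype.card K - 1 : ℕ) : ℂ)) *
            ∑ Y : GL (Fin 2) F, ∑ u : Kˣ,
              (if Y * X * Y⁻¹ = e u then (Θ u : ℂ) else 0) * Psi p F 2 X := by
      intro X
      rw [mul_assoc, Finset.sum_mul]
      congr 1
      exact Finset.sum_congr rfl (fun Y _ => by rw [Finset.sum_mul])
    rw [Finset.sum_congr rfl (fun X _ => this X), ← Finset.mul_sum]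
    congr 1
    rw [Finset.sum_comm]
    have : ∀ Y : GL (Fin 2) F,
        (∑ X : GL (Fin 2) F, ∑ u : Kˣ,
          (if Y * X * Y⁻¹ = e u then (Θ u : ℂ) else 0) * Psi p F 2 X) = S := by
      intro Y
      rw [Finset.sum_comm]
      rw [Finset.sum_congr rfl (fun u _ => keyK Y u)]
    rw [Finset.sum_congr rfl (fun Y _ => this Y), Finset.sum_const, Finset.card_univ,
      nsmul_eq_mul]
  -- right summand: the Ind_H part vanishes
  have hright : ∑ X : GL (Fin 2) F,
      ((1 / (((Fintype.card F - 1) * Fintype.card F : ℕ) : ℂ)) *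
          ∑ Y : GL (Fin 2) F, ∑ a : Fˣ, ∑ b : F,
            if ((Y * X * Y⁻¹ : GL (Fin 2) F) : Matrix (Fin 2) (Fin 2) F)
                = !![(a : F), b; 0, 1]
              then (Θ (Units.map ((algebraMap F K) : F →* K) a) : ℂ) * psiF p F (b / (a : F))
              else 0) * Psi p F 2 X = 0 := by
    have : ∀ X : GL (Fin 2) F,
        ((1 / (((Fintype.card F - 1) * Fintype.card F : ℕ) : ℂ)) *
            ∑ Y : GL (Fin 2) F, ∑ a : Fˣ, ∑ b : F,
              if ((Y * X * Y⁻¹ : GL (Fin 2) F) : Matrix (Fin 2) (Fin 2) F)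
                  = !![(a : F), b; 0, 1]
                then (Θ (Units.map ((algebraMap F K) : F →* K) a) : ℂ) * psiF p F (b / (a : F))
                else 0) * Psi p F 2 X
        = (1 / (((Fintype.card F - 1) * Fintype.card F : ℕ) : ℂ)) *
            ∑ Y : GL (Fin 2) F, ∑ a : Fˣ, ∑ b : F,
              (if ((Y * X * Y⁻¹ : GL (Fin 2) F) : Matrix (Fin 2) (Fin 2) F)
                  = !![(a : F), b; 0, 1]
                then (Θ (Units.map ((algebraMap F K) : F →* K) a) : ℂ) * psiF p F (b / (a : F))
                else 0) * Psi p F 2 X := by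
      intro X
      rw [mul_assoc, Finset.sum_mul]
      congr 1
      refine Finset.sum_congr rfl (fun Y _ => ?_)
      rw [Finset.sum_mul]
      refine Finset.sum_congr rfl (fun a _ => ?_)
      rw [Finset.sum_mul]
    rw [Finset.sum_congr rfl (fun X _ => this X), ← Finset.mul_sum, Finset.sum_comm]
    have hY : ∀ Y : GL (Fin 2) F,
        (∑ X : GL (Fin 2) F, ∑ a : Fˣ, ∑ b : F,
          (if ((Y * X * Y⁻¹ : GL (Fin 2) F) : Matrix (Fin 2) (Fin 2) F)
              = !![(a : F), b; 0, 1]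
            then (Θ (Units.map ((algebraMap F K) : F →* K) a) : ℂ) * psiF p F (b / (a : F))
            else 0) * Psi p F 2 X) = 0 := by
      intro Y
      rw [Finset.sum_comm]
      refine Finset.sum_eq_zero (fun a _ => ?_)
      rw [Finset.sum_comm]
      exact keyH Y a
    rw [Finset.sum_congr rfl (fun Y _ => hY Y), Finset.sum_const, smul_zero, mul_zero]
  rw [hleft, hright] at hmain
  -- numeric simplification of the coefficient
  have hcoef : (1 / ((Fintype.card K - 1 : ℕ) : ℂ)) *
      ((Fintype.card (GL (Fin 2) F) : ℂ) * S) = ((q - 1 : ℕ) : ℂ) * (q : ℂ) * S := by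
    have h1 : ((Fintype.card K - 1 : ℕ) : ℂ) = ((q ^ 2 - 1 : ℕ) : ℂ) := by
      rw [hK]
    have h2 : ((Fintype.card (GL (Fin 2) F)) : ℂ) = ((q ^ 2 - 1 : ℕ) : ℂ) *
        ((q ^ 2 - q : ℕ) : ℂ) := by
      rw [hcardG]; push_cast; ring
    have h40 : 4 ≤ q ^ 2 := by
      calc (4 : ℕ) = 2 ^ 2 := rfl
        _ ≤ q ^ 2 := Nat.pow_le_pow_left hq2 2
    have h3 : ((q ^ 2 - 1 : ℕ) : ℂ) ≠ 0 := Nat.cast_ne_zero.2 (by omega)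
    have h4 : ((q ^ 2 - q : ℕ) : ℂ) = ((q - 1 : ℕ) : ℂ) * (q : ℂ) := by
      have : q ^ 2 - q = (q - 1) * q := by rw [Nat.sub_mul, one_mul, pow_two]
      rw [this]; push_cast; ring
    rw [h1, h2, h4]
    have hc : 1 / ((q ^ 2 - 1 : ℕ) : ℂ) * (((q ^ 2 - 1 : ℕ) : ℂ) * (((q - 1 : ℕ) : ℂ) * (q : ℂ)) * S)
        = (1 / ((q ^ 2 - 1 : ℕ) : ℂ) * ((q ^ 2 - 1 : ℕ) : ℂ)) * (((q - 1 : ℕ) : ℂ) * (q : ℂ) * S) := by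
      ring
    rw [hc, one_div_mul_cancel h3, one_mul]
  rw [hcoef] at hmain
  -- conclude
  have hq1 : ((q - 1 : ℕ) : ℂ) ≠ 0 := Nat.cast_ne_zero.2 (by omega)
  have hT : ∑ X : GL (Fin 2) F, LinearMap.trace ℂ V (r X) * Psi p F 2 X
      = -(((q - 1 : ℕ) : ℂ) * (q : ℂ) * S) := by linear_combination hmain
  rw [hT]
  have hc2 : 1 / ((q - 1 : ℕ) : ℂ) * -(((q - 1 : ℕ) : ℂ) * (q : ℂ) * S)
      = -((1 / ((q - 1 : ℕ) : ℂ) * ((q - 1 : ℕ) : ℂ)) * ((q : ℂ) * S)) := by ring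
  rw [hc2, one_div_mul_cancel hq1, one_mul, neg_mul]
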